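/- Let q ≥ 2 be a real number, let s ≥ 1 and m ≥ 2s + 1 be integers, and let 0 < δ ≤ 1 − 3/(q^{2s+1} − 1). Let p = (p_1, p_2, …) be a real sequence with |p_n| < δ^n/q^n for all n ≥ 1, and set x = (p_m, p_{2m}, p_{3m}, …). Then |∂_1 c_1^{(q^m)}(x)| > ( q^m/(q^m − 1) ) · ( 1 − (1 − q^{−m} δ^{2m}) / ( q^m (1 − δ^m)(1 − q^{−m}) ) ), and this lower bound is strictly positive. -/

import Mathlib

/-!
Put `Q = q^m`, `a = δ^m` and `x_k = p_{km}`, so that `|x_k| < (a/Q)^k`. Splitting off the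
factor `k = 1`, `H_Q(x) = exp S · (1 + x_1)^Q` with `S = ∑_{k ≥ 2} M_k(Q) log (1 + x_k)`, hence
`∂_1 c_1 = (Q - E)/(Q - 1)` with `E = exp S · (1 + x_1)^(Q-1)`. Möbius inversion gives
`∑_{d ∣ k} d M_d(Q) = Q^k`, and `d M_d(Q) ≥ 0` for `Q ≥ 2`, so `0 ≤ M_k(Q) ≤ Q^k/k`. With
`log (1 + x) ≤ x` this yields `S ≤ ∑_{k ≥ 2} a^k/k = -log (1 - a) - a`, and since
`(Q - 1) log (1 + x_1) < a - a/Q` we get `E < 1/(1 - a)`. The bound of the theorem is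
`(Q - G)/(Q - 1)` with `G = (Q - a²)/((1 - a)(Q - 1)) ≥ 1/(1 - a)`, and it is positive because
`(1 - a)(Q - 1) ≥ 3`.
-/

/-- `s_1(q) = q + 1` and `s_n(q) = ∑_{d ∣ n} μ(n/d) q^d` for `n ≠ 1`.
(For `n = 0` the sum over divisors is empty, so `sFun q 0 = 0`.) -/
noncomputable def sFun (q : ℝ) (n : ℕ) : ℝ :=
  if n = 1 then q + 1
  else ∑ d ∈ n.divisors, (ArithmeticFunction.moebius (n / d) : ℝ) * q ^ d

/-- `M_n(q) = (1/n) ∑_{d ∣ n} μ(n/d) q^d`; so `M_1(q) = q` and `M_n(q) = s_n(q)/n` for `n ≥ 2`. -/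
noncomputable def MFun (q : ℝ) (n : ℕ) : ℝ :=
  (1 / (n : ℝ)) * ∑ d ∈ n.divisors, (ArithmeticFunction.moebius (n / d) : ℝ) * q ^ d

/-- `H_q(p) = ∏_{n ≥ 1} (1 + p_n)^{M_n(q)}`, a product of real powers (`Real.rpow`).
The `n = 0` factor is `(1 + p 0) ^ (0 : ℝ) = 1`, so the product effectively runs over `n ≥ 1`. -/
noncomputable def Hfun (q : ℝ) (p : ℕ → ℝ) : ℝ :=
  ∏' n : ℕ, (1 + p n) ^ (MFun q n)

/-- `c_1^{(q)}(p) = q·p_1/(q − 1) − (H_q(p) − 1)/(q(q − 1))`. -/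
noncomputable def c1Fun (q : ℝ) (p : ℕ → ℝ) : ℝ :=
  q * p 1 / (q - 1) - (Hfun q p - 1) / (q * (q - 1))

open Finset Real Function

noncomputable def moebiusPowSum (Q : ℝ) (n : ℕ) : ℝ :=
  ∑ d ∈ n.divisors, (ArithmeticFunction.moebius (n / d) : ℝ) * Q ^ d

section Necklace

variable {Q : ℝ}

lemma MFun_eq_moebiusPowSum_div (Q : ℝ) (n : ℕ) : MFun Q n = moebiusPowSum Q n / n :=
  one_div_mul_eq_div _ _

@[simp] lemma MFun_zero (Q : ℝ) : MFun Q 0 = 0 := by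
  simp [MFun]

@[simp] lemma MFun_one (Q : ℝ) : MFun Q 1 = Q := by
  simp [MFun]

lemma sum_divisors_moebiusPowSum (Q : ℝ) {n : ℕ} (hn : 0 < n) :
    ∑ d ∈ n.divisors, moebiusPowSum Q d = Q ^ n := by
  revert n
  rw [ArithmeticFunction.sum_eq_iff_sum_smul_moebius_eq]
  intro n _
  rw [Nat.sum_divisorsAntidiagonal' (f := fun a b => ArithmeticFunction.moebius a • Q ^ b)]
  simp only [zsmul_eq_mul, moebiusPowSum]

lemma geom_sum_lt_pow (hQ : 2 ≤ Q) (n : ℕ) : ∑ i ∈ range n, Q ^ i < Q ^ n := by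
  induction n with
  | zero => simp
  | succ n ih =>
    rw [sum_range_succ, pow_succ]
    nlinarith [pow_pos (show (0 : ℝ) < Q by linarith) n]

lemma moebiusPowSum_nonneg (hQ : 2 ≤ Q) (n : ℕ) : 0 ≤ moebiusPowSum Q n := by
  rcases Nat.eq_zero_or_pos n with rfl | hn
  · simp [moebiusPowSum]
  have hQ0 : 0 ≤ Q := by linarith
  -- the top term `Q ^ n` dominates the geometric sum of all lower powers
  have hproper : ∑ d ∈ n.properDivisors, Q ^ d ≤ ∑ d ∈ range n, Q ^ d :=
    sum_le_sum_of_subset_of_nonneg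
      (fun d hd => mem_range.2 (Nat.mem_properDivisors.1 hd).2)
      (fun d _ _ => pow_nonneg hQ0 d)
  have hlower : -∑ d ∈ n.properDivisors, Q ^ d ≤
      ∑ d ∈ n.properDivisors, (ArithmeticFunction.moebius (n / d) : ℝ) * Q ^ d := by
    rw [← sum_neg_distrib]
    refine sum_le_sum fun d _ => ?_
    have hμ := abs_le.1 (show |(ArithmeticFunction.moebius (n / d) : ℝ)| ≤ 1 by
      exact_mod_cast ArithmeticFunction.abs_moebius_le_one)
    nlinarith [pow_nonneg hQ0 d]
  rw [moebiusPowSum, ← Nat.cons_self_properDivisors hn.ne', sum_cons, Nat.div_self hn,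
    ArithmeticFunction.moebius_apply_one, Int.cast_one, one_mul]
  linarith [geom_sum_lt_pow hQ n]

lemma moebiusPowSum_le_pow (hQ : 2 ≤ Q) {n : ℕ} (hn : 0 < n) : moebiusPowSum Q n ≤ Q ^ n :=
  sum_divisors_moebiusPowSum Q hn ▸
    single_le_sum (fun d _ => moebiusPowSum_nonneg hQ d) (Nat.mem_divisors_self n hn.ne')

lemma MFun_nonneg (hQ : 2 ≤ Q) (n : ℕ) : 0 ≤ MFun Q n := by
  rw [MFun_eq_moebiusPowSum_div]
  exact div_nonneg (moebiusPowSum_nonneg hQ n) n.cast_nonneg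

lemma MFun_le_pow_div (hQ : 2 ≤ Q) (n : ℕ) : MFun Q n ≤ Q ^ n / n := by
  rcases Nat.eq_zero_or_pos n with rfl | hn
  · simp
  rw [MFun_eq_moebiusPowSum_div]
  exact div_le_div_of_nonneg_right (moebiusPowSum_le_pow hQ hn) n.cast_nonneg

end Necklace

lemma abs_log_one_add_le_two_mul {y : ℝ} (hy : |y| ≤ 1 / 2) : |log (1 + y)| ≤ 2 * |y| := by
  have h := abs_log_sub_add_sum_range_le (x := -y) (by rw [abs_neg]; linarith) 0
  rw [sum_range_zero, zero_add, sub_neg_eq_add, abs_neg, zero_add, pow_one] at h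
  calc |log (1 + y)| ≤ |y| / (1 - |y|) := h
    _ ≤ 2 * |y| := by
      rw [div_le_iff₀ (by linarith)]
      nlinarith [abs_nonneg y]

-- The `n = 0` term `a ^ 0 / 0` vanishes by Lean's convention `x / 0 = 0`.
lemma hasSum_pow_div_update_one {a : ℝ} (ha : |a| < 1) :
    HasSum (update (fun n : ℕ => a ^ n / n) 1 0) (-log (1 - a) - a) := by
  have h : HasSum (fun n : ℕ => a ^ n / n) (-log (1 - a)) := by
    rw [← hasSum_nat_add_iff' 1]
    simpa using hasSum_pow_div_log_of_abs_lt_one ha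
  have h' := h.update 1 0
  rwa [Nat.cast_one, pow_one, div_one, zero_sub, neg_add_eq_sub] at h'

section LogSeries

variable {Q a : ℝ} (hQ : 2 ≤ Q) (ha0 : 0 ≤ a) (ha1 : a < 1)
include hQ ha0 ha1

lemma div_pow_le_half {n : ℕ} (hn : 1 ≤ n) : (a / Q) ^ n ≤ 1 / 2 := by
  have h0 : 0 ≤ a / Q := div_nonneg ha0 (by linarith)
  have h1 : a / Q ≤ 1 / 2 := by rw [div_le_iff₀ (by linarith)]; linarith
  calc (a / Q) ^ n ≤ a / Q := pow_le_of_le_one h0 (by linarith) (by omega)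
    _ ≤ 1 / 2 := h1

lemma MFun_mul_log_one_add_le {n : ℕ} (hn : 1 ≤ n) {y : ℝ} (hy : |y| ≤ (a / Q) ^ n) :
    MFun Q n * log (1 + y) ≤ a ^ n / n := by
  have hy1 : 0 < 1 + y := by linarith [neg_abs_le y, div_pow_le_half hQ ha0 ha1 hn]
  have hlog : log (1 + y) ≤ (a / Q) ^ n := by
    linarith [log_le_sub_one_of_pos hy1, le_abs_self y]
  calc MFun Q n * log (1 + y) ≤ MFun Q n * (a / Q) ^ n :=
        mul_le_mul_of_nonneg_left hlog (MFun_nonneg hQ n)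
    _ ≤ Q ^ n / n * (a / Q) ^ n :=
        mul_le_mul_of_nonneg_right (MFun_le_pow_div hQ n) (pow_nonneg (by positivity) n)
    _ = a ^ n / n := by rw [div_pow]; field_simp

variable {x : ℕ → ℝ}

lemma summable_MFun_mul_log (hx : ∀ n, 1 ≤ n → |x n| ≤ (a / Q) ^ n) :
    Summable fun n => MFun Q n * log (1 + x n) := by
  refine Summable.of_norm_bounded ((summable_geometric_of_lt_one ha0 ha1).mul_left 2) fun n => ?_
  rcases Nat.eq_zero_or_pos n with rfl | hn
  · simp
  have hxn := hx n hn
  rw [Real.norm_eq_abs, abs_mul, abs_of_nonneg (MFun_nonneg hQ n)]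
  calc MFun Q n * |log (1 + x n)| ≤ Q ^ n / n * (2 * (a / Q) ^ n) :=
        mul_le_mul (MFun_le_pow_div hQ n)
          ((abs_log_one_add_le_two_mul (hxn.trans (div_pow_le_half hQ ha0 ha1 hn))).trans
            (by linarith))
          (abs_nonneg _) (by positivity)
    _ = 2 * (a ^ n / n) := by rw [div_pow]; field_simp
    _ ≤ 2 * a ^ n := by
      gcongr
      exact div_le_self (pow_nonneg ha0 n) (by exact_mod_cast hn)

lemma tsum_MFun_mul_log_le (hx1 : x 1 = 0) (hx : ∀ n, 1 ≤ n → |x n| ≤ (a / Q) ^ n) :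
    ∑' n, MFun Q n * log (1 + x n) ≤ -log (1 - a) - a := by
  have hb := hasSum_pow_div_update_one (abs_lt.2 ⟨by linarith, ha1⟩)
  refine hasSum_le (fun n => ?_) (summable_MFun_mul_log hQ ha0 ha1 hx).hasSum hb
  rcases lt_trichotomy n 1 with hn | rfl | hn
  · simp [Nat.lt_one_iff.1 hn]
  · simp [hx1]
  · rw [update_of_ne hn.ne']
    exact MFun_mul_log_one_add_le hQ ha0 ha1 hn.le (hx n hn.le)

end LogSeries

lemma hasProd_rpow_MFun {Q S : ℝ} {x : ℕ → ℝ} (hx : ∀ n, 1 ≤ n → 0 < 1 + x n)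
    (hS : HasSum (fun n => MFun Q n * log (1 + x n)) S) :
    HasProd (fun n => (1 + x n) ^ MFun Q n) (exp S) := by
  convert hS.rexp using 1
  funext n
  rcases Nat.eq_zero_or_pos n with rfl | hn
  · simp
  · rw [comp_apply, rpow_def_of_pos (hx n hn), mul_comm]

lemma Hfun_update_one {Q P : ℝ} {x : ℕ → ℝ} (hx1 : x 1 = 0)
    (hP : HasProd (fun n => (1 + x n) ^ MFun Q n) P) (t : ℝ) :
    Hfun Q (update x 1 t) = P * (1 + t) ^ Q := by
  have hfactor : (fun n => (1 + update x 1 t n) ^ MFun Q n) =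
      fun n => (1 + x n) ^ MFun Q n * if n = 1 then (1 + t) ^ Q else 1 := by
    funext n
    by_cases hn : n = 1
    · subst hn; simp [hx1]
    · simp [hn]
  rw [Hfun, hfactor, (hP.mul (hasProd_ite_eq 1 _)).tprod_eq]

lemma hasDerivAt_c1Fun_update_one {Q P t : ℝ} {x : ℕ → ℝ} (hQ : 1 < Q) (hx1 : x 1 = 0)
    (hP : HasProd (fun n => (1 + x n) ^ MFun Q n) P) (ht : 0 < 1 + t) :
    HasDerivAt (fun t => c1Fun Q (update x 1 t)) ((Q - P * (1 + t) ^ (Q - 1)) / (Q - 1)) t := by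
  simp only [c1Fun, Hfun_update_one hx1 hP, update_self]
  have hpow : HasDerivAt (fun t => (1 + t) ^ Q) (1 * Q * (1 + t) ^ (Q - 1)) t :=
    ((hasDerivAt_id t).const_add 1).rpow_const (Or.inl ht.ne')
  refine ((((hasDerivAt_id' t).const_mul Q).div_const (Q - 1)).sub
    (((hpow.const_mul P).sub_const 1).div_const (Q * (Q - 1)))).congr_deriv ?_
  have : Q - 1 ≠ 0 := by linarith
  field_simp

lemma exp_mul_rpow_lt_inv_one_sub {Q a S t : ℝ} (hQ : 1 ≤ Q) (ha : a < 1)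
    (hS : S ≤ -log (1 - a) - a) (ht : |t| < a / Q) :
    exp S * (1 + t) ^ (Q - 1) < (1 - a)⁻¹ := by
  have hQ0 : 0 < Q := by linarith
  have ht1 : 0 < 1 + t := by
    have : a / Q < 1 := (div_lt_one hQ0).2 (by linarith)
    linarith [neg_abs_le t]
  have hlog : (Q - 1) * log (1 + t) ≤ (Q - 1) * (a / Q) :=
    mul_le_mul_of_nonneg_left (by linarith [log_le_sub_one_of_pos ht1, le_abs_self t])
      (by linarith)
  have hexponent : S + (Q - 1) * log (1 + t) < -log (1 - a) := by
    have : (Q - 1) * (a / Q) = a - a / Q := by field_simp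
    linarith [abs_nonneg t]
  calc exp S * (1 + t) ^ (Q - 1) = exp (S + (Q - 1) * log (1 + t)) := by
        rw [rpow_def_of_pos ht1, ← exp_add, mul_comm (log _)]
    _ < exp (-log (1 - a)) := exp_lt_exp.2 hexponent
    _ = (1 - a)⁻¹ := by rw [exp_neg, exp_log (by linarith)]

section LowerBound

variable {Q a : ℝ}

noncomputable def c1LowerBound (Q a : ℝ) : ℝ :=
  Q / (Q - 1) * (1 - (1 - Q⁻¹ * a ^ 2) / (Q * (1 - a) * (1 - Q⁻¹)))

lemma c1LowerBound_eq (hQ : 1 < Q) (ha : a < 1) :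
    c1LowerBound Q a = (Q - (Q - a ^ 2) / ((1 - a) * (Q - 1))) / (Q - 1) := by
  have : Q - 1 ≠ 0 := by linarith
  have : 1 - a ≠ 0 := by linarith
  rw [c1LowerBound]
  field_simp

lemma c1LowerBound_lt {E : ℝ} (hQ : 1 < Q) (ha : |a| < 1) (hE : E < (1 - a)⁻¹) :
    c1LowerBound Q a < (Q - E) / (Q - 1) := by
  obtain ⟨ha0, ha1⟩ := abs_lt.1 ha
  have hW : 0 < (1 - a) * (Q - 1) := mul_pos (by linarith) (by linarith)
  have hinv : (1 - a)⁻¹ ≤ (Q - a ^ 2) / ((1 - a) * (Q - 1)) := by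
    rw [le_div_iff₀ hW, inv_mul_cancel_left₀ (by linarith)]
    nlinarith
  rw [c1LowerBound_eq hQ ha1]
  exact div_lt_div_of_pos_right (by linarith) (by linarith)

lemma c1LowerBound_pos (hQ : 1 < Q) (ha0 : 0 < a) (h : 1 ≤ (1 - a) * (Q - 1)) :
    0 < c1LowerBound Q a := by
  have ha1 : a < 1 := by nlinarith
  have hG : (Q - a ^ 2) / ((1 - a) * (Q - 1)) < Q := by
    rw [div_lt_iff₀ (by linarith)]
    nlinarith
  rw [c1LowerBound_eq hQ ha1]
  exact div_pos (by linarith) (by linarith)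

end LowerBound

theorem exists_hasDerivAt_c1Fun_update_one {Q a : ℝ} {x : ℕ → ℝ} (hQ : 2 ≤ Q) (ha0 : 0 ≤ a)
    (ha1 : a < 1) (hx : ∀ n, 1 ≤ n → |x n| ≤ (a / Q) ^ n) (hx1 : |x 1| < a / Q) :
    ∃ E < (1 - a)⁻¹,
      HasDerivAt (fun t => c1Fun Q (update x 1 t)) ((Q - E) / (Q - 1)) (x 1) := by
  set y := update x 1 0
  have hy1 : y 1 = 0 := update_self ..
  have hy : ∀ n, 1 ≤ n → |y n| ≤ (a / Q) ^ n := by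
    intro n hn
    rcases eq_or_ne n 1 with rfl | hn1
    · rw [hy1, abs_zero]; positivity
    · rw [show y n = x n from update_of_ne hn1 _ _]; exact hx n hn
  have hpos : ∀ n, 1 ≤ n → 0 < 1 + y n := fun n hn => by
    linarith [neg_abs_le (y n), hy n hn, div_pow_le_half hQ ha0 ha1 hn]
  have hprod := hasProd_rpow_MFun hpos (summable_MFun_mul_log hQ ha0 ha1 hy).hasSum
  refine ⟨_, exp_mul_rpow_lt_inv_one_sub (by linarith) ha1
    (tsum_MFun_mul_log_le hQ ha0 ha1 hy1 hy) hx1, ?_⟩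
  have hD := hasDerivAt_c1Fun_update_one (by linarith) hy1 hprod (t := x 1) (by
    linarith [neg_abs_le (x 1), pow_one (a / Q) ▸ div_pow_le_half hQ ha0 ha1 le_rfl])
  simpa only [y, update_idem] using hD

lemma three_le_one_sub_pow_mul_pow_sub_one {q δ : ℝ} {k m : ℕ} (hq : 2 ≤ q) (hk : 1 ≤ k)
    (hkm : k ≤ m) (hδ0 : 0 ≤ δ) (hδ1 : δ ≤ 1 - 3 / (q ^ k - 1)) :
    3 ≤ (1 - δ ^ m) * (q ^ m - 1) := by
  have hqk : 2 ≤ q ^ k := hq.trans (le_self_pow₀ (by linarith) (by omega))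
  have hqm : q ^ k ≤ q ^ m := pow_le_pow_right₀ (by linarith) hkm
  have hδ : δ < 1 := by linarith [div_pos three_pos (by linarith : 0 < q ^ k - 1)]
  have hδm : δ ^ m ≤ δ := pow_le_of_le_one hδ0 hδ.le (by omega)
  have h : 3 / (q ^ m - 1) ≤ 1 - δ ^ m := by
    linarith [div_le_div_of_nonneg_left zero_le_three (by linarith : 0 < q ^ k - 1)
      (by linarith : q ^ k - 1 ≤ q ^ m - 1)]
  rwa [div_le_iff₀ (by linarith)] at h

theorem abs_deriv_c1_subsequence_gt_general (q δ : ℝ) (hq : 2 ≤ q) (s m : ℕ)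
    (hm : 2 * s + 1 ≤ m)
    (hδ0 : 0 < δ) (hδ1 : δ ≤ 1 - 3 / (q ^ (2 * s + 1) - 1))
    (p : ℕ → ℝ) (hp : ∀ n : ℕ, 1 ≤ n → |p n| < δ ^ n / q ^ n) :
    ∃ D : ℝ,
      HasDerivAt
        (fun t : ℝ => c1Fun (q ^ m) (Function.update (fun k : ℕ => p (k * m)) 1 t)) D (p m) ∧
      (q ^ m / (q ^ m - 1))
          * (1 - (1 - (q ^ m)⁻¹ * δ ^ (2 * m))
                / (q ^ m * (1 - δ ^ m) * (1 - (q ^ m)⁻¹))) < |D| ∧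
      0 < (q ^ m / (q ^ m - 1))
          * (1 - (1 - (q ^ m)⁻¹ * δ ^ (2 * m))
                / (q ^ m * (1 - δ ^ m) * (1 - (q ^ m)⁻¹))) := by
  have hQ : 2 ≤ q ^ m := hq.trans (le_self_pow₀ (by linarith) (by omega))
  have h3 := three_le_one_sub_pow_mul_pow_sub_one hq (by omega) hm hδ0.le hδ1
  have ha1 : δ ^ m < 1 := by nlinarith
  have hx : ∀ n, 1 ≤ n → |p (n * m)| < (δ ^ m / q ^ m) ^ n := fun n hn => by
    rw [div_pow, ← pow_mul, ← pow_mul, mul_comm m n]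
    exact hp _ (Nat.mul_pos hn (by omega))
  obtain ⟨E, hE, hD⟩ := exists_hasDerivAt_c1Fun_update_one hQ (pow_pos hδ0 m).le ha1
    (fun n hn => (hx n hn).le) (by simpa using hx 1 le_rfl)
  rw [pow_mul']
  refine ⟨_, by simpa only [one_mul] using hD, ?_,
    c1LowerBound_pos (by linarith) (pow_pos hδ0 m) (by linarith)⟩
  calc c1LowerBound (q ^ m) (δ ^ m) < (q ^ m - E) / (q ^ m - 1) :=
        c1LowerBound_lt (by linarith) (abs_lt.2 ⟨by linarith [pow_pos hδ0 m], ha1⟩) hE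
    _ ≤ _ := le_abs_self _

/-- For `q ≥ 2`, integers `s ≥ 1` and `m ≥ 2s + 1`, `0 < δ ≤ 1 − 3/(q^{2s+1} − 1)`, and a real
sequence `p` with `|p_n| < δ^n/q^n` for all `n ≥ 1`, consider the subsequence
`x = (p_m, p_{2m}, …)`, i.e. `x k = p (k·m)`. Then the partial derivative
`∂_1 c_1^{(q^m)}(x)` exists and satisfies
`|∂_1 c_1^{(q^m)}(x)| > (q^m/(q^m − 1)) · (1 − (1 − q^{−m} δ^{2m})/(q^m (1 − δ^m)(1 − q^{−m})))`,
and this lower bound is strictly positive. -/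
theorem abs_deriv_c1_subsequence_gt (q δ : ℝ) (hq : 2 ≤ q) (s m : ℕ)
    (hs : 1 ≤ s) (hm : 2 * s + 1 ≤ m)
    (hδ0 : 0 < δ) (hδ1 : δ ≤ 1 - 3 / (q ^ (2 * s + 1) - 1))
    (p : ℕ → ℝ) (hp : ∀ n : ℕ, 1 ≤ n → |p n| < δ ^ n / q ^ n) :
    ∃ D : ℝ,
      HasDerivAt
        (fun t : ℝ => c1Fun (q ^ m) (Function.update (fun k : ℕ => p (k * m)) 1 t)) D (p m) ∧
      (q ^ m / (q ^ m - 1))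
          * (1 - (1 - (q ^ m)⁻¹ * δ ^ (2 * m))
                / (q ^ m * (1 - δ ^ m) * (1 - (q ^ m)⁻¹))) < |D| ∧
      0 < (q ^ m / (q ^ m - 1))
          * (1 - (1 - (q ^ m)⁻¹ * δ ^ (2 * m))
                / (q ^ m * (1 - δ ^ m) * (1 - (q ^ m)⁻¹))) :=
  abs_deriv_c1_subsequence_gt_general q δ hq s m hm hδ0 hδ1 p hp
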